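/- arXiv:2109.06791 — 5 statements merged into one kernel-verified Lean document; each statement's English description precedes it below -/
import Mathlib

section
/- Let Ω be a finite set, q a probability vector on Ω with q(ω) > 0 for all ω, γ ∈ (0,1), and h : Ω → ℝ. Then sup_{p ∈ P(γ)} ∑_ω p(ω) h(ω) = γ · max_{ω ∈ Ω} h(ω) + (1−γ) · CVaR_γ(h; q), where CVaR_γ(h; q) = inf_{u ∈ ℝ} { u + (1/(1−γ)) ∑_ω q(ω) max(h(ω) − u, 0) } and P(γ) is the total-variation ambiguity set of radius γ around q. -/
open Finset

def IsProbVec {Ω : Type*} [Fintype Ω] (p : Ω → ℝ) : Prop :=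
  (∀ ω, 0 ≤ p ω) ∧ ∑ ω, p ω = 1

noncomputable def tv {Ω : Type*} [Fintype Ω] (p q : Ω → ℝ) : ℝ :=
  (1 / 2) * ∑ ω, |p ω - q ω|

def Amb {Ω : Type*} [Fintype Ω] (q : Ω → ℝ) (γ : ℝ) : Set (Ω → ℝ) :=
  {p | IsProbVec p ∧ tv p q ≤ γ}

/-!
For `p ∈ Amb q γ` the positive part of `p - q` has total mass `tv p q ≤ γ`, so for every level `u ≤ max h`
replacing `q` by `p` raises `∑ (h - u)⁺` by at most `γ (max h - u)`; this gives
`∑ p h ≤ γ max h + (1 - γ) u + ∑ q (h - u)⁺` for every `u`. Conversely, let `(1 - γ) r` be the restriction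
of `q` to its upper tail of mass `1 - γ` above the quantile `u` (splitting the atom at `u`). Then `r`
attains the Rockafellar–Uryasev objective at `u`, and putting mass `γ` on a maximiser of `h` on top of
`(1 - γ) r` stays in `Amb q γ` and attains the bound.
-/

namespace IsProbVec

variable {Ω : Type*} [Fintype Ω] {p : Ω → ℝ}

lemma sum_mul_sub_const (hp : IsProbVec p) (f : Ω → ℝ) (c : ℝ) :
    ∑ ω, p ω * (f ω - c) = ∑ ω, p ω * f ω - c := by
  simp only [mul_sub, sum_sub_distrib, ← sum_mul, hp.2, one_mul]

lemma sum_mul_le_of_le (hp : IsProbVec p) {f : Ω → ℝ} {M : ℝ} (hf : ∀ ω, f ω ≤ M) :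
    ∑ ω, p ω * f ω ≤ M := by
  calc ∑ ω, p ω * f ω ≤ ∑ ω, p ω * M :=
        sum_le_sum fun ω _ => mul_le_mul_of_nonneg_left (hf ω) (hp.1 ω)
    _ = M := by rw [← sum_mul, hp.2, one_mul]

end IsProbVec

section

variable {Ω : Type*} [Fintype Ω]

lemma tv_eq_sum_max_sub_zero {p q : Ω → ℝ} (hpq : ∑ ω, p ω = ∑ ω, q ω) :
    tv p q = ∑ ω, max (p ω - q ω) 0 := by
  have habs : ∀ x : ℝ, |x| = 2 * max x 0 - x := fun x => by
    rcases le_total 0 x with hx | hx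
    · rw [abs_of_nonneg hx, max_eq_left hx]; ring
    · rw [abs_of_nonpos hx, max_eq_right hx]; ring
  simp only [tv, habs, sum_sub_distrib, ← mul_sum, hpq, sub_self]
  ring

lemma sum_sub_mul_le_tv_mul {p q f : Ω → ℝ} (hpq : ∑ ω, p ω = ∑ ω, q ω) {B : ℝ}
    (hf₀ : ∀ ω, 0 ≤ f ω) (hfB : ∀ ω, f ω ≤ B) :
    ∑ ω, (p ω - q ω) * f ω ≤ tv p q * B := by
  rw [tv_eq_sum_max_sub_zero hpq, sum_mul]
  refine sum_le_sum fun ω _ => ?_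
  calc (p ω - q ω) * f ω ≤ max (p ω - q ω) 0 * f ω :=
        mul_le_mul_of_nonneg_right (le_max_left _ _) (hf₀ ω)
    _ ≤ max (p ω - q ω) 0 * B := mul_le_mul_of_nonneg_left (hfB ω) (le_max_right _ _)

lemma self_mem_Amb {q : Ω → ℝ} (hq : IsProbVec q) {γ : ℝ} (hγ : 0 ≤ γ) : q ∈ Amb q γ :=
  ⟨hq, by simpa [tv] using hγ⟩

lemma single_add_smul_mem_Amb [DecidableEq Ω] {q r : Ω → ℝ} (hq : IsProbVec q)
    (hr : IsProbVec r) {γ : ℝ} (hγ0 : 0 ≤ γ) (hγ1 : γ ≤ 1) (hrq : ∀ ω, (1 - γ) * r ω ≤ q ω)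
    (ω₀ : Ω) : Pi.single ω₀ γ + (1 - γ) • r ∈ Amb q γ := by
  have hsum : ∑ ω, (Pi.single ω₀ γ + (1 - γ) • r : Ω → ℝ) ω = 1 := by
    simp [sum_add_distrib, ← mul_sum, hr.2]
  have hsingle : 0 ≤ (Pi.single ω₀ γ : Ω → ℝ) := Pi.single_nonneg.2 hγ0
  refine ⟨⟨fun ω => add_nonneg (hsingle ω) (mul_nonneg (by linarith) (hr.1 ω)), hsum⟩, ?_⟩
  rw [tv_eq_sum_max_sub_zero (hsum.trans hq.2.symm)]
  calc ∑ ω, max ((Pi.single ω₀ γ + (1 - γ) • r : Ω → ℝ) ω - q ω) 0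
      ≤ ∑ ω, Pi.single ω₀ γ ω := sum_le_sum fun ω _ => by
        refine max_le ?_ (hsingle ω)
        simp only [Pi.add_apply, Pi.smul_apply, smul_eq_mul]
        linarith [hrq ω]
    _ = γ := by simp

noncomputable def ruObjective (q : Ω → ℝ) (γ : ℝ) (h : Ω → ℝ) (u : ℝ) : ℝ :=
  u + (1 - γ)⁻¹ * ∑ ω, q ω * max (h ω - u) 0

lemma mul_ruObjective (q : Ω → ℝ) {γ : ℝ} (hγ : γ ≠ 1) (h : Ω → ℝ) (u : ℝ) :
    (1 - γ) * ruObjective q γ h u = (1 - γ) * u + ∑ ω, q ω * max (h ω - u) 0 := by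
  rw [ruObjective, mul_add, mul_inv_cancel_left₀ (sub_ne_zero.2 hγ.symm)]

lemma sum_mul_le_of_mem_Amb {q p : Ω → ℝ} (hq : IsProbVec q) {γ : ℝ} (hγ : γ ≤ 1)
    (hp : p ∈ Amb q γ) {h : Ω → ℝ} {M : ℝ} (hM : ∀ ω, h ω ≤ M) (u : ℝ) :
    ∑ ω, p ω * h ω ≤ γ * M + ((1 - γ) * u + ∑ ω, q ω * max (h ω - u) 0) := by
  have htail : 0 ≤ ∑ ω, q ω * max (h ω - u) 0 :=
    sum_nonneg fun ω _ => mul_nonneg (hq.1 ω) (le_max_right _ _)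
  rcases le_or_gt u M with huM | hMu
  · have hshift : ∑ ω, (p ω - q ω) * max (h ω - u) 0 ≤ γ * (M - u) :=
      (sum_sub_mul_le_tv_mul (hp.1.2.trans hq.2.symm) (fun _ => le_max_right _ _)
        (fun ω => max_le (by linarith [hM ω]) (by linarith))).trans
        (mul_le_mul_of_nonneg_right hp.2 (by linarith))
    have hpos : ∑ ω, p ω * (h ω - u) ≤ ∑ ω, p ω * max (h ω - u) 0 :=
      sum_le_sum fun ω _ => mul_le_mul_of_nonneg_left (le_max_left _ _) (hp.1.1 ω)
    simp only [sub_mul, sum_sub_distrib] at hshift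
    rw [hp.1.sum_mul_sub_const] at hpos
    linarith
  · nlinarith [hp.1.sum_mul_le_of_le hM]

lemma exists_level [Nonempty Ω] {q : Ω → ℝ} (hq : IsProbVec q) (h : Ω → ℝ) {α : ℝ}
    (hα0 : 0 ≤ α) (hα1 : α ≤ 1) :
    ∃ u, ∑ ω with u < h ω, q ω ≤ α ∧ α ≤ ∑ ω with u ≤ h ω, q ω := by
  obtain ⟨ωmin, hωmin⟩ := Finite.exists_min h
  obtain ⟨ω₀, hω₀, hmax⟩ := exists_max_image {ω | α ≤ ∑ ω' with h ω ≤ h ω', q ω'} h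
    ⟨ωmin, by simpa [hωmin, hq.2] using hα1⟩
  refine ⟨h ω₀, ?_, (mem_filter.1 hω₀).2⟩
  by_contra! hlt
  have hne : (univ.filter (fun ω => h ω₀ < h ω)).Nonempty := by
    by_contra hE
    rw [not_nonempty_iff_eq_empty] at hE
    rw [hE, sum_empty] at hlt
    linarith
  obtain ⟨ω₁, hω₁, hmin⟩ := exists_min_image _ h hne
  have hω₁ : h ω₀ < h ω₁ := (mem_filter.1 hω₁).2
  have hsame : univ.filter (fun ω => h ω₁ ≤ h ω) = univ.filter (fun ω => h ω₀ < h ω) := by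
    ext ω
    simp only [mem_filter, mem_univ, true_and]
    exact ⟨hω₁.trans_le, fun hω => hmin ω (by simpa using hω)⟩
  have := hmax ω₁ (mem_filter.2 ⟨mem_univ _, hsame ▸ hlt.le⟩)
  linarith

lemma exists_tail_weight [Nonempty Ω] {q : Ω → ℝ} (hq : IsProbVec q) (h : Ω → ℝ) {α : ℝ}
    (hα0 : 0 ≤ α) (hα1 : α ≤ 1) :
    ∃ u : ℝ, ∃ w : Ω → ℝ, (∀ ω, 0 ≤ w ω ∧ w ω ≤ 1) ∧
      (∀ ω, w ω * (h ω - u) = max (h ω - u) 0) ∧ ∑ ω, q ω * w ω = α := by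
  obtain ⟨u, hlow, hhigh⟩ := exists_level hq h hα0 hα1
  obtain ⟨a, b, ha, hb, hab, habα⟩ : α ∈ segment ℝ (∑ ω with u < h ω, q ω)
      (∑ ω with u ≤ h ω, q ω) := by
    rw [segment_eq_Icc (hlow.trans hhigh)]
    exact ⟨hlow, hhigh⟩
  refine ⟨u, fun ω => a * (if u < h ω then 1 else 0) + b * (if u ≤ h ω then 1 else 0),
    fun ω => ?_, fun ω => ?_, ?_⟩
  · dsimp only
    constructor <;> split_ifs <;> nlinarith
  · rcases lt_trichotomy u (h ω) with hu | hu | hu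
    · simp [hu, hu.le, hab]
    · simp [hu]
    · simp [not_lt.2 hu.le, not_le.2 hu, max_eq_right (sub_nonpos.2 hu.le)]
  · simp only [mul_add, mul_ite, mul_one, mul_zero, sum_add_distrib, ← sum_filter, ← sum_mul]
    rw [← habα, smul_eq_mul, smul_eq_mul, mul_comm a, mul_comm b]

lemma exists_isProbVec_sum_mul_eq_ruObjective [Nonempty Ω] {q : Ω → ℝ} (hq : IsProbVec q)
    {γ : ℝ} (hγ0 : 0 ≤ γ) (hγ1 : γ < 1) (h : Ω → ℝ) :
    ∃ r : Ω → ℝ, ∃ u : ℝ, IsProbVec r ∧ (∀ ω, (1 - γ) * r ω ≤ q ω) ∧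
      ∑ ω, r ω * h ω = ruObjective q γ h u := by
  have hα : 0 < 1 - γ := sub_pos.2 hγ1
  obtain ⟨u, w, hw, hwh, hqw⟩ := exists_tail_weight hq h hα.le (by linarith)
  have hr : IsProbVec fun ω => (1 - γ)⁻¹ * (q ω * w ω) :=
    ⟨fun ω => mul_nonneg (inv_nonneg.2 hα.le) (mul_nonneg (hq.1 ω) (hw ω).1),
      by rw [← mul_sum, hqw, inv_mul_cancel₀ hα.ne']⟩
  refine ⟨_, u, hr, fun ω => ?_, ?_⟩
  · rw [mul_inv_cancel_left₀ hα.ne']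
    exact mul_le_of_le_one_right (hq.1 ω) (hw ω).2
  · rw [ruObjective, ← sub_eq_iff_eq_add', ← hr.sum_mul_sub_const, mul_sum]
    exact sum_congr rfl fun ω _ => by rw [← hwh ω]; ring

end

theorem worstcase_eq_sup_cvar_general {Ω : Type*} [Fintype Ω] [Nonempty Ω]
    (q : Ω → ℝ) (hq : IsProbVec q)
    (γ : ℝ) (hγ0 : 0 < γ) (hγ1 : γ < 1) (h : Ω → ℝ) :
    sSup ((fun p => ∑ ω, p ω * h ω) '' Amb q γ) =
      γ * (⨆ ω : Ω, h ω) +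
        (1 - γ) * sInf (Set.range fun u : ℝ =>
          u + (1 - γ)⁻¹ * ∑ ω, q ω * max (h ω - u) 0) := by
  classical
  change _ = _ + (1 - γ) * ⨅ u, ruObjective q γ h u
  obtain ⟨ωmax, hωmax⟩ := exists_eq_ciSup_of_finite (f := h)
  set M := ⨆ ω, h ω
  have hα : 0 < 1 - γ := sub_pos.2 hγ1
  have hM : ∀ ω, h ω ≤ M := le_ciSup (Set.finite_range h).bddAbove
  have hbound : ∀ p ∈ Amb q γ, ∀ u, ∑ ω, p ω * h ω ≤ γ * M + (1 - γ) * ruObjective q γ h u :=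
    fun p hp u => by
      rw [mul_ruObjective q hγ1.ne]
      exact sum_mul_le_of_mem_Amb hq hγ1.le hp hM u
  have hub : ∀ x ∈ (fun p => ∑ ω, p ω * h ω) '' Amb q γ,
      x ≤ γ * M + (1 - γ) * ⨅ u, ruObjective q γ h u := by
    rintro _ ⟨p, hp, rfl⟩
    show ∑ ω, p ω * h ω ≤ _
    rw [← sub_le_iff_le_add', ← div_le_iff₀' hα]
    exact le_ciInf fun u => (div_le_iff₀' hα).2 (sub_le_iff_le_add'.2 (hbound p hp u))
  have hbdd : BddBelow (Set.range (ruObjective q γ h)) := by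
    refine ⟨(∑ ω, q ω * h ω - γ * M) / (1 - γ), ?_⟩
    rintro _ ⟨u, rfl⟩
    rw [div_le_iff₀' hα]
    linarith [hbound q (self_mem_Amb hq hγ0.le) u]
  obtain ⟨r, u, hr, hrq, hru⟩ := exists_isProbVec_sum_mul_eq_ruObjective hq hγ0.le hγ1 h
  have hmem := single_add_smul_mem_Amb hq hr hγ0.le hγ1.le hrq ωmax
  refine le_antisymm (csSup_le ⟨_, Set.mem_image_of_mem _ hmem⟩ hub) ?_
  calc γ * M + (1 - γ) * ⨅ u, ruObjective q γ h u
      ≤ γ * M + (1 - γ) * ruObjective q γ h u := by gcongr; exact ciInf_le hbdd u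
    _ = ∑ ω, (Pi.single ωmax γ + (1 - γ) • r : Ω → ℝ) ω * h ω := by
      simp [add_mul, sum_add_distrib, Pi.single_apply, mul_assoc, ← mul_sum, hru, hωmax]
    _ ≤ _ := le_csSup ⟨_, hub⟩ ⟨_, hmem, rfl⟩

theorem worstcase_eq_sup_cvar {Ω : Type*} [Fintype Ω] [Nonempty Ω]
    (q : Ω → ℝ) (hq : IsProbVec q) (hqpos : ∀ ω, 0 < q ω)
    (γ : ℝ) (hγ0 : 0 < γ) (hγ1 : γ < 1) (h : Ω → ℝ) :
    sSup ((fun p => ∑ ω, p ω * h ω) '' Amb q γ) =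
      γ * (⨆ ω : Ω, h ω) +
        (1 - γ) * sInf (Set.range fun u : ℝ =>
          u + (1 - γ)⁻¹ * ∑ ω, q ω * max (h ω - u) 0) :=
  worstcase_eq_sup_cvar_general q hq γ hγ0 hγ1 h
end

section
/- Let Ω be a finite set, q a probability vector on Ω, γ ∈ (0,1), h : Ω → ℝ, and P(γ) the total-variation ambiguity set around q. Let η := VaR_γ(h;q) be the left-side γ-quantile of h under q, i.e., η = inf{ u : ∑_{ω : h(ω) ≤ u} q(ω) ≥ γ }. If ∑_{ω: h(ω) ≤ η} q(ω) = γ, then for every maximizer p* of max_{p∈P(γ)} ∑_ω p(ω)h(ω) and every ω' ∈ Ω with h(ω') ≤ η, p*(ω') = 0. -/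
open Finset

noncomputable def VaR {Ω : Type*} [Fintype Ω] (γ : ℝ) (h q : Ω → ℝ) : ℝ :=
  sInf {u : ℝ | γ ≤ ∑ ω ∈ Finset.univ.filter (fun ω => h ω ≤ u), q ω}

lemma sum_two_diff {Ω : Type*} [Fintype Ω] [DecidableEq Ω] {a b : Ω} (hab : a ≠ b)
    (g : Ω → ℝ) (hg : ∀ ω, ω ≠ a → ω ≠ b → g ω = 0) : ∑ ω, g ω = g a + g b := by
  rw [← Finset.sum_pair hab]
  refine (Finset.sum_subset (Finset.subset_univ _) ?_).symm
  intro x _ hx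
  simp only [Finset.mem_insert, Finset.mem_singleton, not_or] at hx
  exact hg x hx.1 hx.2

/-- Perturbation lemma: moving ε mass from `a` to `b` with `h a < h b` strictly
improves the objective; if the TV constraint stays satisfied, `p` was not optimal. -/
lemma perturb_false {Ω : Type*} [Fintype Ω] (q p h : Ω → ℝ) (γ : ℝ)
    (hp : p ∈ Amb q γ)
    (hopt : ∀ p' ∈ Amb q γ, ∑ ω, p' ω * h ω ≤ ∑ ω, p ω * h ω)
    (a b : Ω) (hab : h a < h b) (ε : ℝ) (hε : 0 < ε) (hεa : ε ≤ p a)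
    (htv : |p b + ε - q b| + |p a - ε - q a| ≤ |p b - q b| + |p a - q a| + 2 * (γ - tv p q)) :
    False := by
  classical
  have hba : a ≠ b := by rintro rfl; exact absurd hab (lt_irrefl _)
  set p' : Ω → ℝ := fun ω => if ω = b then p ω + ε else if ω = a then p ω - ε else p ω with hp'
  have hp'b : p' b = p b + ε := by simp [hp']
  have hp'a : p' a = p a - ε := by simp [hp', hba, Ne.symm hba]
  have hp'o : ∀ ω, ω ≠ a → ω ≠ b → p' ω = p ω := by
    intro ω h1 h2; simp [hp', h1, h2]
  have key : ∀ F : Ω → ℝ → ℝ,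
      ∑ ω, F ω (p' ω) = (∑ ω, F ω (p ω)) + (F a (p a - ε) - F a (p a))
        + (F b (p b + ε) - F b (p b)) := by
    intro F
    have h2 : ∑ ω, (F ω (p' ω) - F ω (p ω))
        = (F a (p' a) - F a (p a)) + (F b (p' b) - F b (p b)) :=
      sum_two_diff hba (fun ω => F ω (p' ω) - F ω (p ω))
        (fun ω h1 h2 => by show F ω (p' ω) - F ω (p ω) = 0; rw [hp'o ω h1 h2]; ring)
    rw [Finset.sum_sub_distrib] at h2
    rw [hp'a, hp'b] at h2
    linarith
  have hsum1 : ∑ ω, p' ω = 1 := by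
    have := key (fun _ x => x)
    rw [this, hp.1.2]; ring
  have hnonneg : ∀ ω, 0 ≤ p' ω := by
    intro ω
    by_cases h1 : ω = b
    · rw [h1, hp'b]; have := hp.1.1 b; linarith
    · by_cases h2 : ω = a
      · rw [h2, hp'a]; linarith
      · rw [hp'o ω h2 h1]; exact hp.1.1 ω
  have htv' : tv p' q ≤ γ := by
    have := key (fun ω x => |x - q ω|)
    unfold tv at *
    rw [this]
    linarith
  have hobj : ∑ ω, p' ω * h ω = (∑ ω, p ω * h ω) + ε * (h b - h a) := by
    have := key (fun ω x => x * h ω)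
    rw [this]; ring
  have hmem : p' ∈ Amb q γ := ⟨⟨hnonneg, hsum1⟩, htv'⟩
  have := hopt p' hmem
  rw [hobj] at this
  nlinarith [mul_pos hε (sub_pos.mpr hab)]

theorem maximizer_vanishes_below_quantile {Ω : Type*} [Fintype Ω] [Nonempty Ω]
    (q : Ω → ℝ) (hq : IsProbVec q) (γ : ℝ) (hγ0 : 0 < γ) (hγ1 : γ < 1)
    (h : Ω → ℝ) (hnonconst : ∃ ω₁ ω₂, h ω₁ ≠ h ω₂)
    (hmass : ∑ ω ∈ Finset.univ.filter (fun ω => h ω ≤ VaR γ h q), q ω = γ)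
    (p : Ω → ℝ) (hp : p ∈ Amb q γ)
    (hopt : ∀ p' ∈ Amb q γ, ∑ ω, p' ω * h ω ≤ ∑ ω, p ω * h ω)
    (ω' : Ω) (hω' : h ω' ≤ VaR γ h q) :
    p ω' = 0 := by
  classical
  set η := VaR γ h q with hη
  by_contra hne
  have hp0 : ∀ ω, 0 ≤ p ω := hp.1.1
  have hq0 : ∀ ω, 0 ≤ q ω := hq.1
  have hppos : 0 < p ω' := lt_of_le_of_ne (hp0 ω') (Ne.symm hne)
  have htvle : tv p q ≤ γ := hp.2
  -- existence of ω₀ with η < h ω₀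
  have hcompl : ∑ ω ∈ univ.filter (fun ω => ¬ h ω ≤ η), q ω = 1 - γ := by
    have hsplit := Finset.sum_filter_add_sum_filter_not univ (fun ω => h ω ≤ η) q
    rw [hq.2] at hsplit
    linarith [hmass]
  have hex : ∃ ω₀, η < h ω₀ := by
    by_contra hno
    push_neg at hno
    have : (univ.filter (fun ω => ¬ h ω ≤ η)) = ∅ :=
      Finset.filter_eq_empty_iff.mpr (fun ω _ => not_not.mpr (hno ω))
    rw [this, Finset.sum_empty] at hcompl
    linarith
  obtain ⟨ω₀, hω₀⟩ := hex
  have hhab : h ω' < h ω₀ := lt_of_le_of_lt hω' hω₀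
  by_cases hA : ∃ b, h ω' < h b ∧ p b < q b
  · -- Case A: can move mass to a scenario with deficit
    obtain ⟨b, hb1, hb2⟩ := hA
    refine perturb_false q p h γ hp hopt ω' b hb1 (min (p ω') (q b - p b))
      (lt_min hppos (by linarith)) (min_le_left _ _) ?_
    set ε := min (p ω') (q b - p b) with hε
    have hε1 : ε ≤ q b - p b := min_le_right _ _
    have hε0 : 0 < ε := lt_min hppos (by linarith)
    have e1 : |p b + ε - q b| = q b - p b - ε := by
      rw [abs_of_nonpos (by linarith)]; ring
    have e2 : |p b - q b| = q b - p b := by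
      rw [abs_of_nonpos (by linarith)]; ring
    have e3 : |p ω' - ε - q ω'| ≤ |p ω' - q ω'| + ε := by
      have h1 : |p ω' - ε - q ω'| = |(p ω' - q ω') + (-ε)| := by ring_nf
      rw [h1]
      calc |(p ω' - q ω') + (-ε)| ≤ |p ω' - q ω'| + |(-ε)| := abs_add_le _ _
        _ = |p ω' - q ω'| + ε := by rw [abs_neg, abs_of_pos hε0]
    linarith
  · push_neg at hA
    -- Case B: p ≥ q on all scenarios strictly above h ω'
    have hqω₀ : q ω₀ ≤ p ω₀ := hA ω₀ hhab
    by_cases hB1 : q ω' < p ω'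
    · -- B1: surplus at ω'; moving it to ω₀ keeps tv unchanged
      refine perturb_false q p h γ hp hopt ω' ω₀ hhab (p ω' - q ω')
        (by linarith) (by linarith [hq0 ω']) ?_
      have e1 : |p ω₀ + (p ω' - q ω') - q ω₀| = p ω₀ - q ω₀ + (p ω' - q ω') := by
        rw [abs_of_nonneg (by linarith)]; ring
      have e2 : |p ω₀ - q ω₀| = p ω₀ - q ω₀ := abs_of_nonneg (by linarith)
      have e3 : |p ω' - (p ω' - q ω') - q ω'| = 0 := by
        rw [show p ω' - (p ω' - q ω') - q ω' = 0 by ring, abs_zero]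
      have e4 : |p ω' - q ω'| = p ω' - q ω' := abs_of_nonneg (by linarith)
      linarith
    · push_neg at hB1
      by_cases hB2 : tv p q < γ
      · -- B2a: slack in TV constraint
        refine perturb_false q p h γ hp hopt ω' ω₀ hhab (min (p ω') (γ - tv p q))
          (lt_min hppos (by linarith)) (min_le_left _ _) ?_
        set ε := min (p ω') (γ - tv p q) with hε
        have hε1 : ε ≤ γ - tv p q := min_le_right _ _
        have hε0 : 0 < ε := lt_min hppos (by linarith)
        have e1 : |p ω₀ + ε - q ω₀| ≤ |p ω₀ - q ω₀| + ε := by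
          calc |p ω₀ + ε - q ω₀| = |(p ω₀ - q ω₀) + ε| := by ring_nf
            _ ≤ |p ω₀ - q ω₀| + |ε| := abs_add_le _ _
            _ = |p ω₀ - q ω₀| + ε := by rw [abs_of_pos hε0]
        have e2 : |p ω' - ε - q ω'| ≤ |p ω' - q ω'| + ε := by
          calc |p ω' - ε - q ω'| = |(p ω' - q ω') + (-ε)| := by ring_nf
            _ ≤ |p ω' - q ω'| + |(-ε)| := abs_add_le _ _
            _ = |p ω' - q ω'| + ε := by rw [abs_neg, abs_of_pos hε0]
        linarith
      · -- B2b: TV tight; equality forces p ω' = 0 directly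
        have htveq : tv p q = γ := le_antisymm htvle (not_lt.1 hB2)
        have hsum0 : ∑ ω, (q ω - p ω) = 0 := by
          rw [Finset.sum_sub_distrib, hp.1.2, hq.2]; ring
        have habs : ∑ ω, |p ω - q ω| = 2 * γ := by
          unfold tv at htveq; linarith
        have hneg : ∑ ω, max (q ω - p ω) 0 = γ := by
          have hpt : ∀ ω, max (q ω - p ω) 0 = ((q ω - p ω) + |p ω - q ω|) / 2 := by
            intro ω
            rw [abs_sub_comm]
            rcases le_total 0 (q ω - p ω) with hc | hc
            · rw [max_eq_left hc, abs_of_nonneg hc]; ring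
            · rw [max_eq_right hc, abs_of_nonpos hc]; ring
          calc ∑ ω, max (q ω - p ω) 0 = ∑ ω, ((q ω - p ω) + |p ω - q ω|) / 2 :=
                Finset.sum_congr rfl (fun ω _ => hpt ω)
            _ = ((∑ ω, (q ω - p ω)) + ∑ ω, |p ω - q ω|) / 2 := by
                rw [← Finset.sum_add_distrib, ← Finset.sum_div]
            _ = γ := by rw [hsum0, habs]; ring
        set T := univ.filter (fun ω => h ω ≤ h ω') with hT
        have hTsplit : ∑ ω ∈ T, max (q ω - p ω) 0 = γ := by
          have hsp := Finset.sum_filter_add_sum_filter_not univ (fun ω => h ω ≤ h ω')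
            (fun ω => max (q ω - p ω) 0)
          have hz : ∑ ω ∈ univ.filter (fun ω => ¬ h ω ≤ h ω'), max (q ω - p ω) 0 = 0 := by
            apply Finset.sum_eq_zero
            intro ω hw
            rw [Finset.mem_filter] at hw
            have := hA ω (lt_of_not_ge hw.2)
            exact max_eq_right (by linarith)
          rw [hz, add_zero] at hsp
          rw [hT, hsp, hneg]
        have hTq : ∑ ω ∈ T, q ω ≤ γ := by
          rw [← hmass]
          apply Finset.sum_le_sum_of_subset_of_nonneg
          · intro ω hw
            rw [Finset.mem_filter] at *
            exact ⟨hw.1, le_trans hw.2 hω'⟩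
          · intro ω _ _; exact hq0 ω
        have hptw : ∀ ω ∈ T, max (q ω - p ω) 0 ≤ q ω := by
          intro ω _
          exact max_le (by linarith [hp0 ω]) (hq0 ω)
        have hall : ∀ ω ∈ T, max (q ω - p ω) 0 = q ω := by
          intro ω hw
          by_contra hc
          have hlt : max (q ω - p ω) 0 < q ω := lt_of_le_of_ne (hptw ω hw) hc
          have : ∑ ω ∈ T, max (q ω - p ω) 0 < ∑ ω ∈ T, q ω :=
            Finset.sum_lt_sum hptw ⟨ω, hw, hlt⟩
          linarith
        have hω'T : ω' ∈ T := by rw [hT, Finset.mem_filter]; exact ⟨Finset.mem_univ _, le_refl _⟩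
        have hfin := hall ω' hω'T
        rw [max_eq_left (by linarith)] at hfin
        exact hne (by linarith)
end

section
/- Let Ω be a finite set with |Ω| ≥ 2, q a probability vector on Ω, γ ∈ (0,1], and S ⊆ Ω. The restricted ambiguity set P(γ) ∩ { p : p(ω) = 0 ∀ω ∈ S } is nonempty if and only if ∑_{ω ∈ S} q(ω) ≤ γ and S ≠ Ω. -/
open Finset

open Classical in
theorem restricted_amb_nonempty_iff {Ω : Type*} [Fintype Ω]
    (hcard : 2 ≤ Fintype.card Ω)
    (q : Ω → ℝ) (hq : IsProbVec q) (γ : ℝ) (hγ0 : 0 < γ) (hγ1 : γ ≤ 1)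
    (S : Set Ω) :
    (Amb q γ ∩ {p : Ω → ℝ | ∀ ω ∈ S, p ω = 0}).Nonempty ↔
      (∑ ω ∈ Finset.univ.filter (fun ω => ω ∈ S), q ω) ≤ γ ∧ S ≠ Set.univ := by
  classical
  set F := Finset.univ.filter (fun ω => ω ∈ S) with hF
  set F' := Finset.univ.filter (fun ω => ¬ ω ∈ S) with hF'
  set Q := ∑ ω ∈ F, q ω with hQdef
  have hQ0 : 0 ≤ Q := Finset.sum_nonneg fun ω _ => hq.1 ω
  have hsplitq : ∑ ω ∈ F, q ω + ∑ ω ∈ F', q ω = 1 := by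
    rw [hF, hF', Finset.sum_filter_add_sum_filter_not]; exact hq.2
  constructor
  · rintro ⟨p, ⟨⟨hp0, hp1⟩, htv⟩, hpz⟩
    have hzF : ∑ ω ∈ F, p ω = 0 := Finset.sum_eq_zero fun ω hω => by
      rw [hF, Finset.mem_filter] at hω; exact hpz ω hω.2
    have hsplitp : ∑ ω ∈ F, p ω + ∑ ω ∈ F', p ω = 1 := by
      rw [hF, hF', Finset.sum_filter_add_sum_filter_not]; exact hp1
    have h1 : ∑ ω ∈ F, |p ω - q ω| = Q := by
      rw [hQdef]
      refine Finset.sum_congr rfl fun ω hω => ?_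
      rw [hF, Finset.mem_filter] at hω
      rw [hpz ω hω.2, zero_sub, abs_neg, abs_of_nonneg (hq.1 ω)]
    have h2 : Q ≤ ∑ ω ∈ F', |p ω - q ω| := by
      have habs : |∑ ω ∈ F', (p ω - q ω)| ≤ ∑ ω ∈ F', |p ω - q ω| :=
        Finset.abs_sum_le_sum_abs _ _
      have hsum : ∑ ω ∈ F', (p ω - q ω) = Q := by
        rw [Finset.sum_sub_distrib]
        have hp' : ∑ ω ∈ F', p ω = 1 := by linarith
        have hq' : ∑ ω ∈ F', q ω = 1 - Q := by rw [hQdef] at *; linarith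
        rw [hp', hq']; ring
      calc Q = |∑ ω ∈ F', (p ω - q ω)| := by rw [hsum, abs_of_nonneg hQ0]
        _ ≤ _ := habs
    have htot : 2 * Q ≤ ∑ ω, |p ω - q ω| := by
      have : ∑ ω ∈ F, |p ω - q ω| + ∑ ω ∈ F', |p ω - q ω| = ∑ ω, |p ω - q ω| := by
        rw [hF, hF', Finset.sum_filter_add_sum_filter_not]
      linarith
    constructor
    · have : tv p q ≤ γ := htv
      rw [tv] at this
      linarith
    · intro hSuniv
      have : ∑ ω, p ω = 0 :=
        Finset.sum_eq_zero fun ω _ => hpz ω (hSuniv ▸ Set.mem_univ ω)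
      rw [hp1] at this; norm_num at this
  · rintro ⟨hQγ, hSne⟩
    obtain ⟨ω₀, hω₀⟩ := Set.ne_univ_iff_exists_notMem S |>.mp hSne
    set p : Ω → ℝ := fun ω => (if ω ∈ S then 0 else q ω) + (if ω = ω₀ then Q else 0)
      with hp
    have hsum1 : ∑ ω, (if ω ∈ S then (0:ℝ) else q ω) = 1 - Q := by
      have : ∑ ω, (if ω ∈ S then (0:ℝ) else q ω)
          = ∑ ω ∈ F', q ω := by
        rw [hF', Finset.sum_filter]
        refine Finset.sum_congr rfl fun ω _ => ?_
        by_cases h : ω ∈ S <;> simp [h]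
      rw [this, hQdef] at *; linarith
    have hsum2 : ∑ ω, (if ω = ω₀ then Q else (0:ℝ)) = Q := by
      simp [Finset.sum_ite_eq']
    refine ⟨p, ⟨⟨fun ω => ?_, ?_⟩, ?_⟩, fun ω hω => ?_⟩
    · rw [hp]
      dsimp only
      have h3 := hq.1 ω; have h4 := hq.1 ω₀
      by_cases h1 : ω ∈ S <;> by_cases h2 : ω = ω₀ <;>
        simp [h1, h2, hω₀] <;> linarith
    · rw [hp, Finset.sum_add_distrib, hsum1, hsum2]; ring
    · show tv p q ≤ γ
      rw [tv]
      have habs : ∀ ω, |p ω - q ω|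
          = (if ω ∈ S then q ω else 0) + (if ω = ω₀ then Q else 0) := by
        intro ω
        rw [hp]; dsimp only
        by_cases h1 : ω ∈ S
        · have h2 : ω ≠ ω₀ := fun h => hω₀ (h ▸ h1)
          simp [h1, h2, abs_of_nonneg (hq.1 ω)]
        · by_cases h2 : ω = ω₀
          · simp [h1, h2, hω₀, abs_of_nonneg hQ0]
          · simp [h1, h2]
      have : ∑ ω, |p ω - q ω| = Q + Q := by
        simp_rw [habs]
        rw [Finset.sum_add_distrib, hsum2]
        congr 1
        rw [hQdef, hF, Finset.sum_filter]
      rw [this]; linarith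
    · have h2 : ω ≠ ω₀ := fun h => hω₀ (h ▸ hω)
      rw [hp]; simp [hω, h2]
end

section
/- Let Ω be a finite set, q a probability vector with q(ω) > 0 for all ω, γ ∈ (0,1), h : Ω → ℝ nonconstant, and p* any maximizer of ∑_ω p(ω) h(ω) over the TV ambiguity set P(γ). If ω' is the unique maximizer of h (i.e., h(ω') > h(ω) for all ω ≠ ω'), then p*(ω') ≥ γ > 0. -/
open Finset

/-!
If `p (ω') < γ`, moving a little mass from some other scenario `a` to `ω'` keeps `p` in the
TV ball and strictly increases `∑ p h`, contradicting optimality. Either some `a ≠ ω'` has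
`p a > q a`, and moving at most `p a - q a` does not increase the distance to `q`; or `p ≤ q`
off `ω'`, and then `tv p q = p ω' - q ω' < γ` leaves slack for the move.
-/

section Transfer

variable {Ω : Type*} [DecidableEq Ω]

def transferMass (p : Ω → ℝ) (a b : Ω) (δ : ℝ) (x : Ω) : ℝ :=
  p x - (if x = a then δ else 0) + (if x = b then δ else 0)

variable [Fintype Ω]

theorem sum_transferMass (p : Ω → ℝ) (a b : Ω) (δ : ℝ) :
    ∑ x, transferMass p a b δ x = ∑ x, p x := by
  simp [transferMass, sum_add_distrib, sum_sub_distrib]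

theorem sum_transferMass_mul (p h : Ω → ℝ) (a b : Ω) (δ : ℝ) :
    ∑ x, transferMass p a b δ x * h x = ∑ x, p x * h x + δ * (h b - h a) := by
  simp only [transferMass, add_mul, sub_mul, sum_add_distrib, sum_sub_distrib, ite_mul, zero_mul,
    sum_ite_eq', mem_univ, if_true]
  ring

theorem isProbVec_transferMass {p : Ω → ℝ} (hp : IsProbVec p) {a : Ω} (b : Ω) {δ : ℝ}
    (hδ : 0 ≤ δ) (hδa : δ ≤ p a) : IsProbVec (transferMass p a b δ) := by
  refine ⟨fun x => ?_, (sum_transferMass p a b δ).trans hp.2⟩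
  unfold transferMass
  split_ifs with hxa <;> subst_vars <;> linarith [hp.1 x]

theorem tv_transferMass_le (p q : Ω → ℝ) (a b : Ω) {δ : ℝ} (hδ : 0 ≤ δ) :
    tv (transferMass p a b δ) q ≤ tv p q + δ := by
  have hpt : ∀ x, |transferMass p a b δ x - q x|
      ≤ |p x - q x| + ((if x = a then δ else 0) + (if x = b then δ else 0)) := fun x => by
    unfold transferMass
    split_ifs <;> simp only [sub_zero, add_zero, abs_le] <;>
      constructor <;> linarith [neg_abs_le (p x - q x), le_abs_self (p x - q x)]
  have hsum := sum_le_sum fun x (_ : x ∈ univ) => hpt x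
  simp only [sum_add_distrib, sum_ite_eq', mem_univ, if_true] at hsum
  unfold tv
  linarith

theorem tv_transferMass_le_of_le_sub (p q : Ω → ℝ) {a b : Ω} (hab : a ≠ b) {δ : ℝ}
    (hδ : 0 ≤ δ) (hδa : δ ≤ p a - q a) : tv (transferMass p a b δ) q ≤ tv p q := by
  have hpt : ∀ x, |transferMass p a b δ x - q x|
      ≤ |p x - q x| + ((if x = b then δ else 0) - (if x = a then δ else 0)) := fun x => by
    unfold transferMass
    split_ifs with hxa hxb hxb
    · exact absurd (hxa.symm.trans hxb) hab
    · subst hxa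
      rw [abs_of_nonneg (by linarith), abs_of_nonneg (by linarith)]
      linarith
    · simp only [sub_zero, abs_le]
      constructor <;> linarith [neg_abs_le (p x - q x), le_abs_self (p x - q x)]
    · simp
  have hsum := sum_le_sum fun x (_ : x ∈ univ) => hpt x
  simp only [sum_add_distrib, sum_sub_distrib, sum_ite_eq', mem_univ, if_true, sub_self,
    add_zero] at hsum
  unfold tv
  linarith

end Transfer

section TotalVariation

variable {Ω : Type*} [Fintype Ω]

theorem tv_eq_sum_max {p q : Ω → ℝ} (hpq : ∑ x, p x = ∑ x, q x) :
    tv p q = ∑ x, max (p x - q x) 0 := by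
  have hpt : ∀ x, |p x - q x| = 2 * max (p x - q x) 0 - (p x - q x) := fun x => by
    rcases le_total (p x - q x) 0 with h | h
    · rw [abs_of_nonpos h, max_eq_right h]; ring
    · rw [abs_of_nonneg h, max_eq_left h]; ring
  simp only [tv, hpt, sum_sub_distrib, ← mul_sum, hpq, sub_self]
  ring

theorem tv_eq_max_of_forall_ne_le {p q : Ω → ℝ} (hpq : ∑ x, p x = ∑ x, q x) {b : Ω}
    (hle : ∀ x, x ≠ b → p x ≤ q x) : tv p q = max (p b - q b) 0 := by
  rw [tv_eq_sum_max hpq, sum_eq_single b (fun x _ hx => max_eq_right (by linarith [hle x hx]))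
    (by simp)]

theorem IsProbVec.exists_ne_pos {p : Ω → ℝ} (hp : IsProbVec p) {b : Ω} (hb : p b < 1) :
    ∃ a, a ≠ b ∧ 0 < p a := by
  by_contra! hzero
  have : ∑ x, p x = p b :=
    sum_eq_single b (fun x _ hx => le_antisymm (hzero x hx) (hp.1 x)) (by simp)
  linarith [hp.2]

theorem exists_transferMass_mem_amb [DecidableEq Ω] {p q : Ω → ℝ} {γ : ℝ} (hp : p ∈ Amb q γ)
    (hq : IsProbVec q) {b : Ω} (hqb : 0 < q b) (hγ0 : 0 < γ) (hγ1 : γ ≤ 1) (hpb : p b < γ) :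
    ∃ a, a ≠ b ∧ ∃ δ, 0 < δ ∧ transferMass p a b δ ∈ Amb q γ := by
  obtain ⟨hpv, hptv⟩ := hp
  by_cases hexcess : ∃ a, a ≠ b ∧ q a < p a
  · obtain ⟨a, hab, hqpa⟩ := hexcess
    refine ⟨a, hab, p a - q a, sub_pos.2 hqpa,
      isProbVec_transferMass hpv b (by linarith) (by linarith [hq.1 a]), ?_⟩
    exact (tv_transferMass_le_of_le_sub p q hab (by linarith) le_rfl).trans hptv
  · push Not at hexcess
    obtain ⟨a, hab, hpa⟩ := hpv.exists_ne_pos (hpb.trans_le hγ1)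
    have hslack : 0 < γ - tv p q := by
      rw [tv_eq_max_of_forall_ne_le (hpv.2.trans hq.2.symm) hexcess, sub_pos]
      exact max_lt (by linarith) hγ0
    set δ := min (p a) (γ - tv p q)
    have hδ : 0 < δ := lt_min hpa hslack
    refine ⟨a, hab, δ, hδ, isProbVec_transferMass hpv b hδ.le (min_le_left _ _), ?_⟩
    linarith [tv_transferMass_le p q a b hδ.le, min_le_right (p a) (γ - tv p q)]

end TotalVariation

theorem unique_max_mass_at_least_gamma_general {Ω : Type*} [Fintype Ω]
    (q : Ω → ℝ) (hq : IsProbVec q) (hqpos : ∀ ω, 0 < q ω)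
    (γ : ℝ) (hγ0 : 0 < γ) (hγ1 : γ < 1) (h : Ω → ℝ)
    (ω' : Ω) (hmax : ∀ ω, ω ≠ ω' → h ω < h ω')
    (p : Ω → ℝ) (hp : p ∈ Amb q γ)
    (hopt : ∀ p' ∈ Amb q γ, ∑ ω, p' ω * h ω ≤ ∑ ω, p ω * h ω) :
    γ ≤ p ω' ∧ 0 < p ω' := by
  classical
  have hge : γ ≤ p ω' := by
    by_contra! hlt
    obtain ⟨a, hab, δ, hδ, hmem⟩ :=
      exists_transferMass_mem_amb hp hq (hqpos ω') hγ0 hγ1.le hlt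
    have hgain : 0 < δ * (h ω' - h a) := mul_pos hδ (sub_pos.2 (hmax a hab))
    have := hopt _ hmem
    rw [sum_transferMass_mul] at this
    linarith
  exact ⟨hge, hγ0.trans_le hge⟩

theorem unique_max_mass_at_least_gamma {Ω : Type*} [Fintype Ω] [Nonempty Ω]
    (q : Ω → ℝ) (hq : IsProbVec q) (hqpos : ∀ ω, 0 < q ω)
    (γ : ℝ) (hγ0 : 0 < γ) (hγ1 : γ < 1) (h : Ω → ℝ)
    (hnonconst : ∃ ω₁ ω₂, h ω₁ ≠ h ω₂)
    (ω' : Ω) (hmax : ∀ ω, ω ≠ ω' → h ω < h ω')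
    (p : Ω → ℝ) (hp : p ∈ Amb q γ)
    (hopt : ∀ p' ∈ Amb q γ, ∑ ω, p' ω * h ω ≤ ∑ ω, p ω * h ω) :
    γ ≤ p ω' ∧ 0 < p ω' :=
  unique_max_mass_at_least_gamma_general q hq hqpos γ hγ0 hγ1 h ω' hmax p hp hopt
end

section
/- Let Ω be a finite set, q a probability vector, γ ∈ (0,1), and h : Ω → ℝ. Suppose the level set C₂ := { ω : h(ω) = VaR_γ(h;q) } satisfies ∑_{ω ∈ C₂} q(ω) > γ and |C₂| = 1, say C₂ = {ω₀} with q(ω₀) > 0; suppose also that h(ω₀) < max_ω h(ω). Then the maximizer p* of ∑_ω p(ω)h(ω) over the TV ambiguity set P(γ) assigns p*(ω₀) > 0. (Equivalently, the single scenario at the VaR level with excess nominal mass is effective.) -/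
open Finset

theorem quantile_singleton_positive_mass {Ω : Type*} [Fintype Ω] [Nonempty Ω]
    (q : Ω → ℝ) (hq : IsProbVec q) (γ : ℝ) (hγ0 : 0 < γ) (hγ1 : γ < 1)
    (h : Ω → ℝ) (ω₀ : Ω)
    (hC2 : {ω : Ω | h ω = VaR γ h q} = {ω₀})
    (hq0 : 0 < q ω₀)
    (hexcess : γ < ∑ ω ∈ Finset.univ.filter (fun ω => h ω = VaR γ h q), q ω)
    (hbelowmax : h ω₀ < ⨆ ω : Ω, h ω)
    (p : Ω → ℝ) (hp : p ∈ Amb q γ)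
    (hopt : ∀ p' ∈ Amb q γ, ∑ ω, p' ω * h ω ≤ ∑ ω, p ω * h ω) :
    0 < p ω₀ := by
  obtain ⟨⟨hp0, hp1⟩, htv⟩ := hp
  obtain ⟨hq0', hq1⟩ := hq
  have hfil : Finset.univ.filter (fun ω => h ω = VaR γ h q) = {ω₀} := by
    ext ω
    simp only [Finset.mem_filter, Finset.mem_univ, true_and, Finset.mem_singleton]
    have := Set.ext_iff.mp hC2 ω
    simpa using this
  rw [hfil, Finset.sum_singleton] at hexcess
  have habs : ∀ x : ℝ, |x| = x + 2 * max (-x) 0 := by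
    intro x
    rcases le_or_gt 0 x with hx | hx
    · rw [abs_of_nonneg hx, max_eq_right (by linarith)]; ring
    · rw [abs_of_neg hx, max_eq_left (by linarith)]; ring
  have hsum0 : ∑ ω, (p ω - q ω) = 0 := by
    rw [Finset.sum_sub_distrib, hp1, hq1]; ring
  have hkey : tv p q = ∑ ω, max (q ω - p ω) 0 := by
    unfold tv
    have : ∑ ω, |p ω - q ω| = ∑ ω, ((p ω - q ω) + 2 * max (q ω - p ω) 0) := by
      apply Finset.sum_congr rfl
      intro ω _
      have := habs (p ω - q ω)
      simpa [neg_sub] using this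
    rw [this, Finset.sum_add_distrib, hsum0, ← Finset.mul_sum]
    ring
  have hle : max (q ω₀ - p ω₀) 0 ≤ ∑ ω, max (q ω - p ω) 0 := by
    apply Finset.single_le_sum (f := fun ω => max (q ω - p ω) 0)
    · intro ω _; exact le_max_right _ _
    · exact Finset.mem_univ ω₀
  have h1 : q ω₀ - p ω₀ ≤ γ := by
    have := le_trans (le_max_left (q ω₀ - p ω₀) 0) (hle.trans (hkey ▸ htv))
    linarith
  linarith
end
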